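/- The span J_SK of shifted Knuth differences is a right ideal of the Malvenuto–Reutenauer algebra: if u, v ∈ S_p with u ≡_SK v and w′ ∈ S_q, then u * w′ − v * w′ ∈ J_SK. In particular, for w ∈ S_p with p ≥ 2 and w̃ the word obtained from w by swapping its first two letters, (w − w̃) * w′ = Σ (u − ũ)v, summed over words u, v with alph(u) ∪ alph(v) = [p+q], st(u) = w, st(v) = w′. -/

import Mathlib

open scoped TensorProduct

/-! ## Words and permutations -/

/-- `w` is a permutation of `{1, …, n}` written as a word. -/
def IsPermWord (n : ℕ) (w : List ℕ) : Prop := w.Perm (List.range' 1 n)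

/-- Descent set of a word `w = w₁ … w_n` : `{i ∈ [n-1] : w_i > w_{i+1}}` (1-indexed). -/
def wordDes (w : List ℕ) : Finset ℕ :=
  (Finset.Icc 1 (w.length - 1)).filter (fun i => w.getD i 0 < w.getD (i - 1) 0)

/-- Peak set of a subset `D ⊆ [n-1]` : `{i ∈ D \ {1} : i - 1 ∉ D}`. -/
def peakOf (D : Finset ℕ) : Finset ℕ := D.filter (fun i => i ≠ 1 ∧ i - 1 ∉ D)

/-- Peak set of a word. -/
def wordPeak (w : List ℕ) : Finset ℕ := peakOf (wordDes w)

/-- The inverse of a permutation word on letters `1, …, n`. -/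
def invWord (w : List ℕ) : List ℕ :=
  (List.range' 1 w.length).map (fun j => w.idxOf j + 1)

/-- Standardization of a word with distinct letters. -/
def stWord (w : List ℕ) : List ℕ := w.map (fun x => w.countP (fun y => y < x) + 1)

/-- Swap the first two letters of a word. -/
def swap2 : List ℕ → List ℕ
  | x :: y :: t => y :: x :: t
  | l => l

/-- `i` occurs to the right of both `i-1` and `i+1` in `w`. -/
def afterBoth (w : List ℕ) (i : ℕ) : Prop :=
  w.idxOf (i - 1) < w.idxOf i ∧ w.idxOf (i + 1) < w.idxOf i

/-! ## Shifted Knuth equivalence -/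

/-- One shifted Knuth transformation:
(SK1) `xzy ∼ zxy` (x<y<z), (SK2) `yxz ∼ yzx` (x<y<z), (SK3) swap first two letters. -/
inductive SKStep : List ℕ → List ℕ → Prop
  | sk1 (a b : List ℕ) (x y z : ℕ) (h1 : x < y) (h2 : y < z) :
      SKStep (a ++ x :: z :: y :: b) (a ++ z :: x :: y :: b)
  | sk2 (a b : List ℕ) (x y z : ℕ) (h1 : x < y) (h2 : y < z) :
      SKStep (a ++ y :: x :: z :: b) (a ++ y :: z :: x :: b)
  | sk3 (b : List ℕ) (x y : ℕ) : SKStep (x :: y :: b) (y :: x :: b)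

/-- Shifted Knuth equivalence: the equivalence relation generated by `SKStep`. -/
def SKEquiv : List ℕ → List ℕ → Prop := Relation.EqvGen SKStep

/-! ## Tableaux (as lists of rows) -/

/-- A strict partition, as a strictly decreasing list of positive integers. -/
def IsStrictPartition (lam : List ℕ) : Prop :=
  lam.Chain' (fun a b => b < a) ∧ ∀ x ∈ lam, 0 < x

/-- A partition, as a weakly decreasing list of positive integers. -/
def IsPartitionList (lam : List ℕ) : Prop :=
  lam.Chain' (fun a b => b ≤ a) ∧ ∀ x ∈ lam, 0 < x

/-- Entry of `T` in row `i` (0-indexed), position `k` within the row. -/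
def tget (T : List (List ℕ)) (i k : ℕ) : ℕ := (T.getD i []).getD k 0

/-- `T` is a standard shifted tableau of shape the strict partition `lam`:
row `i` (0-indexed) occupies visual columns `i, …, i + lamᵢ - 1`, entries are
`1, …, |lam|` each once, rows and columns strictly increase.  (The cell of row
`i+1` at position `k` sits below the cell of row `i` at position `k+1`.) -/
def IsShiftedStdTab (lam : List ℕ) (T : List (List ℕ)) : Prop :=
  T.map List.length = lam ∧
  T.flatten.Perm (List.range' 1 lam.sum) ∧
  (∀ r ∈ T, r.Chain' (· < ·)) ∧
  (∀ i k, i + 1 < T.length → k + 1 < (T.getD i []).length → k < (T.getD (i + 1) []).length →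
    tget T i (k + 1) < tget T (i + 1) k)

/-- `T` is a standard Young tableau of (unshifted) shape the partition `lam`. -/
def IsStdTab (lam : List ℕ) (T : List (List ℕ)) : Prop :=
  T.map List.length = lam ∧
  T.flatten.Perm (List.range' 1 lam.sum) ∧
  (∀ r ∈ T, r.Chain' (· < ·)) ∧
  (∀ i k, i + 1 < T.length → k < (T.getD i []).length → k < (T.getD (i + 1) []).length →
    tget T i k < tget T (i + 1) k)

/-- Index of the row of `T` containing the entry `v`. -/
def tabRowOf (T : List (List ℕ)) (v : ℕ) : ℕ := T.findIdx (fun r => r.contains v)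

/-- Descent set of a standard (shifted or unshifted) tableau with entries `1, …, n`:
`{i : i lies strictly above i+1}`. -/
def tabDes (n : ℕ) (T : List (List ℕ)) : Finset ℕ :=
  (Finset.Icc 1 (n - 1)).filter (fun i => tabRowOf T i < tabRowOf T (i + 1))

/-- Peak set of a standard tableau. -/
def tabPeak (n : ℕ) (T : List (List ℕ)) : Finset ℕ := peakOf (tabDes n T)

/-- Reading word of a tableau: rows from bottom to top, each row left to right. -/
def readingWord (T : List (List ℕ)) : List ℕ := T.reverse.flatten

/-! ## Marked (shifted) tableaux.  An entry is a pair `(v, p)` where `p = true`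
means the letter is primed (`v′`); the order on the alphabet is
`1′ < 1 < 2′ < 2 < ⋯`. -/

/-- Strict order on the marked alphabet. -/
def mLT (x y : ℕ × Bool) : Prop :=
  x.1 < y.1 ∨ (x.1 = y.1 ∧ x.2 = true ∧ y.2 = false)

/-- `T` is a marked-standard shifted tableau of shape the strict partition `lam`:
entries `1, …, |lam|` each once up to primes, rows and columns increasing in the
marked alphabet, no primed entries on the main diagonal (= first cell of each row). -/
def IsMarkedStdTab (lam : List ℕ) (T : List (List (ℕ × Bool))) : Prop :=
  T.map List.length = lam ∧
  (T.flatten.map Prod.fst).Perm (List.range' 1 lam.sum) ∧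
  (∀ r ∈ T, r.Chain' mLT) ∧
  (∀ i k, i + 1 < T.length → k + 1 < (T.getD i []).length → k < (T.getD (i + 1) []).length →
    mLT ((T.getD i []).getD (k + 1) (0, false)) ((T.getD (i + 1) []).getD k (0, false))) ∧
  (∀ r ∈ T, (r.getD 0 (0, false)).2 = false)

/-- Row index of the entry with value `v` (primed or not). -/
def mRowOf (T : List (List (ℕ × Bool))) (v : ℕ) : ℕ :=
  T.findIdx (fun r => r.any (fun e => e.1 == v))

/-- Whether the entry with value `v` is primed in `T`. -/
def mPrime (T : List (List (ℕ × Bool))) (v : ℕ) : Bool :=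
  (((T.flatten).find? (fun e => e.1 == v)).getD (0, false)).2

/-- Descent set of a marked-standard shifted tableau:
`i` is a descent iff (the entry `i` is unprimed and lies strictly above the `(i+1)`-entry)
or (the entry `i+1` is primed and lies weakly above the `i`-entry). -/
def mDes (n : ℕ) (T : List (List (ℕ × Bool))) : Finset ℕ :=
  (Finset.Icc 1 (n - 1)).filter (fun i =>
    (mPrime T i = false ∧ mRowOf T i < mRowOf T (i + 1)) ∨
    (mPrime T (i + 1) = true ∧ mRowOf T (i + 1) ≤ mRowOf T i))

/-- Remove all primes. -/
def unprime (T : List (List (ℕ × Bool))) : List (List ℕ) := T.map (fun r => r.map Prod.fst)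

/-! ## Sagan–Worley (shifted Schensted) insertion.
`swRow f x i t` inserts `x` into row `i` of `t` by Schensted bumping; a bumped
diagonal entry (position 0 of its row) sets off a chain of column insertions
`swCol` (the non-Schensted move).  The returned Boolean records whether a
non-Schensted move occurred.  `f` is a fuel parameter (always sufficient). -/

mutual
  def swRow : ℕ → ℕ → ℕ → List (List ℕ) → List (List ℕ) × Bool
    | 0, _, _, t => (t, false)
    | f + 1, x, i, t =>
      if i < t.length then
        let r := t.getD i []
        let pos := r.findIdx (fun y => decide (x < y))
        if pos < r.length then
          let y := r.getD pos 0
          let t' := t.set i (r.set pos x)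
          if pos = 0 then swCol f y (i + 1) t' else swRow f y (i + 1) t'
        else (t.set i (r ++ [x]), false)
      else (t ++ [[x]], false)
  def swCol : ℕ → ℕ → ℕ → List (List ℕ) → List (List ℕ) × Bool
    | 0, _, _, t => (t, true)
    | f + 1, y, c, t =>
      match (List.range t.length).find? (fun i =>
          decide (i ≤ c) && decide (c - i < (t.getD i []).length) &&
          decide (y < (t.getD i []).getD (c - i) 0)) with
      | some i =>
          let z := (t.getD i []).getD (c - i) 0
          swCol f z (c + 1) (t.set i ((t.getD i []).set (c - i) y))
      | none =>
          match (List.range t.length).find? (fun i =>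
              decide (i ≤ c) && decide ((t.getD i []).length = c - i)) with
          | some i => (t.set i ((t.getD i []) ++ [y]), true)
          | none => (t ++ [[y]], true)
end

/-- One Sagan–Worley insertion step, with ample fuel. -/
def swInsert (t : List (List ℕ)) (x : ℕ) : List (List ℕ) × Bool :=
  swRow (2 * t.flatten.length + x + 4) x 0 t

/-- Running state `(P, Q, k)` of the Sagan–Worley correspondence on the word `w`:
`P` is the insertion tableau, `Q` the (marked) recording tableau, `k` the next label.
The new cell of `Q` is primed exactly when a non-Schensted move occurred. -/
def swSteps (w : List ℕ) : List (List ℕ) × List (List (ℕ × Bool)) × ℕ :=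
  w.foldl (fun acc x =>
    let P := acc.1
    let Q := acc.2.1
    let k := acc.2.2
    let res := swInsert P x
    let P' := res.1
    let i := ((List.range P'.length).find?
      (fun i => decide ((P.getD i []).length < (P'.getD i []).length))).getD 0
    let Q' := if i < Q.length then Q.set i ((Q.getD i []) ++ [(k, res.2)])
              else Q ++ [[(k, res.2)]]
    (P', Q', k + 1)) ([], [], 1)

/-- The Sagan–Worley insertion tableau `P_SW(w)`. -/
def PSW (w : List ℕ) : List (List ℕ) := (swSteps w).1

/-- The Sagan–Worley recording tableau `Q_SW(w)` (a marked tableau). -/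
def QSW (w : List ℕ) : List (List (ℕ × Bool)) := (swSteps w).2.1

/-! ## Ordinary Robinson–Schensted insertion -/

def rsInsert : ℕ → List (List ℕ) → List (List ℕ)
  | x, [] => [[x]]
  | x, r :: rest =>
    let pos := r.findIdx (fun y => decide (x < y))
    if pos < r.length then (r.set pos x) :: rsInsert (r.getD pos 0) rest
    else (r ++ [x]) :: rest

/-- The Robinson–Schensted insertion tableau `P(w)`. -/
def rsP (w : List ℕ) : List (List ℕ) := w.foldl (fun t x => rsInsert x t) []

/-! ## Skew shifted tableaux and rectification -/

/-- A standard skew shifted tableau of shape `nu/lam`: row `i` occupies visual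
columns `i + lamᵢ, …, i + nuᵢ - 1`, filled by `1, …, |nu| - |lam|` each once,
with rows and columns strictly increasing. -/
def IsSkewShiftedStd (nu lam : List ℕ) (S : List (List ℕ)) : Prop :=
  lam.length ≤ nu.length ∧
  (∀ i, lam.getD i 0 ≤ nu.getD i 0) ∧
  S.map List.length = (List.range nu.length).map (fun i => nu.getD i 0 - lam.getD i 0) ∧
  S.flatten.Perm (List.range' 1 (nu.sum - lam.sum)) ∧
  (∀ r ∈ S, r.Chain' (· < ·)) ∧
  (∀ i c, i + 1 < nu.length →
    i + lam.getD i 0 ≤ c → c < i + nu.getD i 0 →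
    (i + 1) + lam.getD (i + 1) 0 ≤ c → c < (i + 1) + nu.getD (i + 1) 0 →
    (S.getD i []).getD (c - i - lam.getD i 0) 0 <
      (S.getD (i + 1) []).getD (c - (i + 1) - lam.getD (i + 1) 0) 0)

/-- Rectification of a skew shifted tableau (jeu de taquin); since sliding
preserves the shifted Knuth class of the reading word, it is the Sagan–Worley
insertion tableau of the reading word. -/
def rectify (S : List (List ℕ)) : List (List ℕ) := PSW (readingWord S)

/-- The standard shifted tableau of shape `mu` whose `i`-th row contains the
consecutive entries `mu₁+⋯+mu_{i-1}+1, …, mu₁+⋯+mu_i`. -/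
def Trow (mu : List ℕ) : List (List ℕ) :=
  (List.range mu.length).map (fun i => List.range' ((mu.take i).sum + 1) (mu.getD i 0))

/-! ## Quasisymmetric functions, Schur functions, Schur P/Q-functions, peak functions.
All live in the power series ring `MvPowerSeries ℕ ℤ` in variables `x₀, x₁, x₂, …`. -/

/-- The fundamental quasisymmetric function `F_D` of degree `n` for `D ⊆ [n-1]`:
`Σ x_{i₁} ⋯ x_{i_n}` over `i₁ ≤ ⋯ ≤ i_n` with `i_k < i_{k+1}` whenever `k ∈ D`
(1-indexed positions). -/
noncomputable def fundQS (n : ℕ) (D : Finset ℕ) : MvPowerSeries ℕ ℤ := fun m =>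
  (Nat.card {l : Fin n → ℕ // Monotone l ∧
    (∀ i j : Fin n, (j : ℕ) = (i : ℕ) + 1 → (j : ℕ) ∈ D → l i < l j) ∧
    (∑ k, Finsupp.single (l k) 1) = m} : ℤ)

/-- The Schur function `s_mu = Σ_{U ∈ SYT(mu)} F_{Des(U)}`, for `mu ⊢ n`. -/
noncomputable def schurF (n : ℕ) (mu : List ℕ) : MvPowerSeries ℕ ℤ :=
  ∑ᶠ T ∈ {T : List (List ℕ) | IsStdTab mu T}, fundQS n (tabDes n T)

/-- Schur's P-function `P_lam = Σ_{S ∈ ShSYT^±(lam)} F_{Des(S)}`, for `lam ⊢ n` strict. -/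
noncomputable def schurPF (n : ℕ) (lam : List ℕ) : MvPowerSeries ℕ ℤ :=
  ∑ᶠ S ∈ {S : List (List (ℕ × Bool)) | IsMarkedStdTab lam S}, fundQS n (mDes n S)

/-- Schur's Q-function `Q_lam = 2^{ℓ(lam)} P_lam`. -/
noncomputable def schurQF (n : ℕ) (lam : List ℕ) : MvPowerSeries ℕ ℤ :=
  (2 ^ lam.length : ℤ) • schurPF n lam

/-- The complete homogeneous symmetric function `h_n = F_∅`. -/
noncomputable def hFun (n : ℕ) : MvPowerSeries ℕ ℤ := fundQS n ∅

/-- The symmetric function `q_n` with `Σ q_n z^n = Π (1+x_i z)/(1-x_i z)`;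
equivalently `q_n = Σ_{α ⊨ n} 2^{ℓ(α)} M_α`, i.e. the coefficient of a monomial
of total degree `n` is `2^{#variables appearing}`. -/
noncomputable def qFun (n : ℕ) : MvPowerSeries ℕ ℤ := fun m =>
  if (m.sum fun _ e => e) = n then 2 ^ m.support.card else 0

/-- The peak function `K_P = 2^{|P|+1} Σ_{D ⊆ [n-1], P ⊆ D △ (D+1)} F_D`. -/
noncomputable def peakKF (n : ℕ) (P : Finset ℕ) : MvPowerSeries ℕ ℤ :=
  (2 ^ (P.card + 1) : ℤ) •
    ∑ D ∈ (Finset.Icc 1 (n - 1)).powerset.filter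
        (fun D => P ⊆ symmDiff D (D.image (· + 1))), fundQS n D

/-! ## The Malvenuto–Reutenauer algebra `ℤ𝔖`, as the free ℤ-module on words. -/

/-- The word with letters the set `A`, whose standardization is `w`. -/
def wordOn (A : Finset ℕ) (w : List ℕ) : List ℕ :=
  w.map (fun i => (A.sort (· ≤ ·)).getD (i - 1) 0)

/-- The Malvenuto–Reutenauer product of two basis permutations `w ∈ S_p`, `w' ∈ S_q`:
`w * w' = Σ uv` over pairs of words with `alph(u) ∪ alph(v) = [p+q]`, `st(u) = w`,
`st(v) = w'`. -/
noncomputable def mulMR (w w' : List ℕ) : (List ℕ) →₀ ℤ :=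
  ∑ A ∈ (Finset.Icc 1 (w.length + w'.length)).powersetCard w.length,
    Finsupp.single
      (wordOn A w ++ wordOn ((Finset.Icc 1 (w.length + w'.length)) \ A) w') 1

/-- The Malvenuto–Reutenauer coproduct of a basis permutation `w ∈ S_n`:
`Δ(w) = Σ_{i=0}^n w|_{[1,i]} ⊗ st(w|_{[i+1,n]})`. -/
noncomputable def coprodMR (w : List ℕ) :
    TensorProduct ℤ ((List ℕ) →₀ ℤ) ((List ℕ) →₀ ℤ) :=
  ∑ i ∈ Finset.range (w.length + 1),
    (Finsupp.single (w.filter (fun x => x ≤ i)) (1 : ℤ)) ⊗ₜ[ℤ]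
      (Finsupp.single (stWord (w.filter (fun x => i < x))) (1 : ℤ))

/-- `J_SK`: the span of the shifted Knuth differences `u - v`, `u ≡_SK v`. -/
noncomputable def JSK : Submodule ℤ ((List ℕ) →₀ ℤ) :=
  Submodule.span ℤ {x | ∃ n u v, IsPermWord n u ∧ IsPermWord n v ∧ SKEquiv u v ∧
    x = Finsupp.single u 1 - Finsupp.single v 1}

/-! ## Marked shifted semistandard tableaux and standardization (for Statement 19) -/

/-- A marked shifted (semistandard) tableau of shape the strict partition `lam`:
letters from `{1′ < 1 < 2′ < 2 < ⋯}`, rows and columns weakly increasing, each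
unprimed letter at most once per column, each primed letter at most once per row,
no primed entries on the main diagonal.  (Since rows/columns weakly increase,
the multiplicity constraints amount to: adjacent equal entries in a row are
unprimed and adjacent equal entries in a column are primed.) -/
def IsMarkedShiftedSSYT (lam : List ℕ) (T : List (List (ℕ × Bool))) : Prop :=
  IsStrictPartition lam ∧
  T.map List.length = lam ∧
  (∀ r ∈ T, ∀ e ∈ r, 0 < e.1) ∧
  (∀ r ∈ T, r.Chain' (fun x y => mLT x y ∨ (x = y ∧ x.2 = false))) ∧
  (∀ i k, i + 1 < T.length → k + 1 < (T.getD i []).length → k < (T.getD (i + 1) []).length →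
    (mLT ((T.getD i []).getD (k + 1) (0, false)) ((T.getD (i + 1) []).getD k (0, false)) ∨
      (((T.getD i []).getD (k + 1) (0, false)) = ((T.getD (i + 1) []).getD k (0, false)) ∧
        ((T.getD i []).getD (k + 1) (0, false)).2 = true))) ∧
  (∀ r ∈ T, (r.getD 0 (0, false)).2 = false)

/-- The cells of a marked tableau, as triples (row, visual column, entry). -/
def cellsOf (T : List (List (ℕ × Bool))) : List (ℕ × ℕ × (ℕ × Bool)) :=
  (T.zipIdx.map Prod.swap).flatMap (fun p => (p.2.zipIdx.map Prod.swap).map (fun q => (p.1, p.1 + q.1, q.2)))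

/-- Sorting key for standardization: letters are ordered by `1′ < 1 < 2′ < 2 < ⋯`;
equal unprimed letters are ordered left to right (by column), equal primed letters
top to bottom (by row). -/
def cellKey (c : ℕ × ℕ × (ℕ × Bool)) : ℕ × ℕ :=
  (2 * c.2.2.1 - (if c.2.2.2 then 1 else 0), if c.2.2.2 then c.1 else c.2.1)

/-- Lexicographic comparison of keys. -/
def keyLt (a b : ℕ × ℕ) : Bool := a.1 < b.1 || (a.1 == b.1 && a.2 < b.2)

/-- Standardization of a marked shifted tableau: each entry is replaced by its
rank (starting from 1) in the key order, keeping its prime. -/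
def stdization (T : List (List (ℕ × Bool))) : List (List (ℕ × Bool)) :=
  (T.zipIdx.map Prod.swap).map (fun p => (p.2.zipIdx.map Prod.swap).map (fun q =>
    (((cellsOf T).filter (fun c => keyLt (cellKey c) (cellKey (p.1, p.1 + q.1, q.2)))).length + 1,
      q.2.2)))

/-- Weight of a marked tableau: `wtOf T i` = number of entries equal to `i` or `i′`. -/
def wtOf (T : List (List (ℕ × Bool))) : ℕ → ℕ :=
  fun i => ((T.flatten).filter (fun e => e.1 == i)).length

/-!
Every shifted Knuth move is a local rearrangement of letters governed only by their relative
order, so it commutes with relabelling by an increasing map and with appending a fixed suffix.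
Each term `wordOn A u ++ wordOn ([p+q] \ A) w'` of `u * w'` is obtained from `u` in exactly this
way (relabel `1, …, p` increasingly onto `A`, then append), and the terms of `u * w'` and `v * w'`
are paired by the same subset `A`. Hence `u * w' - v * w'` is a sum of shifted Knuth differences.
-/

theorem SKStep.perm {u v : List ℕ} (h : SKStep u v) : u.Perm v := by
  cases h with
  | sk1 a b x y z => exact (List.Perm.swap z x (y :: b)).append_left a
  | sk2 a b x y z => exact ((List.Perm.swap z x b).cons y).append_left a
  | sk3 b x y => exact List.Perm.swap y x b

theorem SKEquiv.perm {u v : List ℕ} (h : SKEquiv u v) : u.Perm v := by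
  induction h with
  | rel _ _ h => exact h.perm
  | refl _ => exact List.Perm.refl _
  | symm _ _ _ ih => exact ih.symm
  | trans _ _ _ _ _ ih₁ ih₂ => exact ih₁.trans ih₂

theorem SKStep.map {f : ℕ → ℕ} {u v : List ℕ} (hf : StrictMonoOn f {x | x ∈ u})
    (h : SKStep u v) : SKStep (u.map f) (v.map f) := by
  cases h with
  | sk1 a b x y z h₁ h₂ =>
      simpa using SKStep.sk1 (a.map f) (b.map f) (f x) (f y) (f z)
        (hf (by simp) (by simp) h₁) (hf (by simp) (by simp) h₂)
  | sk2 a b x y z h₁ h₂ =>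
      simpa using SKStep.sk2 (a.map f) (b.map f) (f x) (f y) (f z)
        (hf (by simp) (by simp) h₁) (hf (by simp) (by simp) h₂)
  | sk3 b x y => simpa using SKStep.sk3 (b.map f) (f x) (f y)

theorem SKEquiv.map {f : ℕ → ℕ} {u v : List ℕ} (h : SKEquiv u v)
    (hf : StrictMonoOn f {x | x ∈ u}) : SKEquiv (u.map f) (v.map f) := by
  induction h with
  | rel _ _ h => exact .rel _ _ (h.map hf)
  | refl _ => exact .refl _
  | symm _ _ h ih => exact .symm _ _ (ih (hf.mono fun _ hx => (SKEquiv.perm h).mem_iff.mp hx))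
  | trans _ _ _ h _ ih₁ ih₂ =>
      exact .trans _ _ _ (ih₁ hf) (ih₂ (hf.mono fun _ hx => (SKEquiv.perm h).mem_iff.mpr hx))

theorem SKStep.append_right (t : List ℕ) {u v : List ℕ} (h : SKStep u v) :
    SKStep (u ++ t) (v ++ t) := by
  cases h with
  | sk1 a b x y z h₁ h₂ => simpa using SKStep.sk1 a (b ++ t) x y z h₁ h₂
  | sk2 a b x y z h₁ h₂ => simpa using SKStep.sk2 a (b ++ t) x y z h₁ h₂
  | sk3 b x y => exact SKStep.sk3 (b ++ t) x y

theorem SKEquiv.append_right (t : List ℕ) {u v : List ℕ} (h : SKEquiv u v) :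
    SKEquiv (u ++ t) (v ++ t) := by
  induction h with
  | rel _ _ h => exact .rel _ _ (h.append_right t)
  | refl _ => exact .refl _
  | symm _ _ _ ih => exact .symm _ _ ih
  | trans _ _ _ _ _ ih₁ ih₂ => exact .trans _ _ _ ih₁ ih₂

theorem IsPermWord.length_eq {n : ℕ} {w : List ℕ} (h : IsPermWord n w) : w.length = n := by
  simpa using List.Perm.length_eq h

theorem IsPermWord.mem_Icc {n : ℕ} {w : List ℕ} (h : IsPermWord n w) {x : ℕ} (hx : x ∈ w) :
    x ∈ Set.Icc 1 n := by
  have := List.mem_range'.mp (h.mem_iff.mp hx)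
  simp only [Set.mem_Icc]
  omega

theorem List.map_getD_range'_one (l : List ℕ) :
    (List.range' 1 l.length).map (fun i => l.getD (i - 1) 0) = l := by
  refine List.ext_getElem (by simp) fun i _ h => ?_
  simp only [List.getElem_map, List.getElem_range']
  rw [show 1 + 1 * i - 1 = i by omega, List.getD_eq_getElem l 0 h]

theorem Finset.sort_Icc_one_perm_range' (n : ℕ) :
    ((Finset.Icc 1 n).sort (· ≤ ·)).Perm (List.range' 1 n) := by
  rw [← Multiset.coe_eq_coe, Finset.sort_eq, Nat.Icc_eq_range']
  simp

theorem Finset.sort_append_sort_sdiff_perm {s A : Finset ℕ} (hA : A ⊆ s) :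
    (A.sort (· ≤ ·) ++ (s \ A).sort (· ≤ ·)).Perm (s.sort (· ≤ ·)) := by
  rw [← Multiset.coe_eq_coe, ← Multiset.coe_add, Finset.sort_eq, Finset.sort_eq,
    Finset.sort_eq, Finset.sdiff_val]
  exact add_tsub_cancel_of_le (Finset.val_le_iff.mpr hA)

theorem wordOn_perm_sort {A : Finset ℕ} {w : List ℕ} (hw : IsPermWord A.card w) :
    (wordOn A w).Perm (A.sort (· ≤ ·)) := by
  have h := hw.map fun i => (A.sort (· ≤ ·)).getD (i - 1) 0
  rwa [← Finset.length_sort (· ≤ ·), List.map_getD_range'_one] at h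

theorem strictMonoOn_getD_sort (A : Finset ℕ) :
    StrictMonoOn (fun i => (A.sort (· ≤ ·)).getD (i - 1) 0) (Set.Icc 1 A.card) := by
  intro x hx y hy hxy
  have hx' : x - 1 < (A.sort (· ≤ ·)).length := by simp only [Finset.length_sort]; grind
  have hy' : y - 1 < (A.sort (· ≤ ·)).length := by simp only [Finset.length_sort]; grind
  simp only [List.getD_eq_getElem _ 0 hx', List.getD_eq_getElem _ 0 hy']
  exact List.pairwise_iff_getElem.mp (Finset.sortedLT_sort A).pairwise _ _ hx' hy' (by grind)

theorem SKEquiv.wordOn {A : Finset ℕ} {u v : List ℕ} (h : SKEquiv u v)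
    (hu : IsPermWord A.card u) : SKEquiv (wordOn A u) (wordOn A v) :=
  h.map ((strictMonoOn_getD_sort A).mono fun _ hx => hu.mem_Icc hx)

theorem isPermWord_wordOn_append {p q : ℕ} {u w' : List ℕ} {A : Finset ℕ}
    (hu : IsPermWord p u) (hw' : IsPermWord q w')
    (hA : A ∈ (Finset.Icc 1 (p + q)).powersetCard p) :
    IsPermWord (p + q) (wordOn A u ++ wordOn (Finset.Icc 1 (p + q) \ A) w') := by
  obtain ⟨hsub, hcard⟩ := Finset.mem_powersetCard.mp hA
  have hcard' : (Finset.Icc 1 (p + q) \ A).card = q := by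
    rw [Finset.card_sdiff_of_subset hsub, Nat.card_Icc, hcard]
    omega
  have hleft := wordOn_perm_sort (A := A) (by rwa [hcard])
  have hright := wordOn_perm_sort (A := Finset.Icc 1 (p + q) \ A) (by rwa [hcard'])
  exact ((hleft.append hright).trans (Finset.sort_append_sort_sdiff_perm hsub)).trans
    (Finset.sort_Icc_one_perm_range' _)

theorem mulMR_sub_mulMR {u v w' : List ℕ} (h : u.length = v.length) :
    mulMR u w' - mulMR v w' =
      ∑ A ∈ (Finset.Icc 1 (u.length + w'.length)).powersetCard u.length,
        (Finsupp.single (wordOn A u ++ wordOn (Finset.Icc 1 (u.length + w'.length) \ A) w') 1 -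
          Finsupp.single (wordOn A v ++ wordOn (Finset.Icc 1 (u.length + w'.length) \ A) w') 1) := by
  rw [mulMR, mulMR, ← h, ← Finset.sum_sub_distrib]

theorem length_swap2 (w : List ℕ) : (swap2 w).length = w.length := by
  rcases w with _ | ⟨_, _ | _⟩ <;> rfl

theorem wordOn_swap2 (A : Finset ℕ) (w : List ℕ) : wordOn A (swap2 w) = swap2 (wordOn A w) := by
  rcases w with _ | ⟨_, _ | _⟩ <;> rfl

/-- `J_SK` is a right ideal of the Malvenuto–Reutenauer algebra:
if `u ≡_SK v` then `u * w' - v * w' ∈ J_SK`; in particular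
`(w - w̃) * w' = Σ (u - ũ)v` over pairs of words with
`alph(u) ∪ alph(v) = [p+q]`, `st(u) = w`, `st(v) = w'`. -/
theorem JSK_right_ideal :
    (∀ (p q : ℕ) (u v w' : List ℕ), IsPermWord p u → IsPermWord p v → IsPermWord q w' →
      SKEquiv u v → mulMR u w' - mulMR v w' ∈ JSK) ∧
    (∀ (p q : ℕ) (w w' : List ℕ), 2 ≤ p → IsPermWord p w → IsPermWord q w' →
      mulMR w w' - mulMR (swap2 w) w' =
        ∑ A ∈ (Finset.Icc 1 (p + q)).powersetCard p,
          (Finsupp.single (wordOn A w ++ wordOn ((Finset.Icc 1 (p + q)) \ A) w') (1 : ℤ) -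
            Finsupp.single (swap2 (wordOn A w) ++ wordOn ((Finset.Icc 1 (p + q)) \ A) w')
              (1 : ℤ))) := by
  refine ⟨fun p q u v w' hu hv hw' huv => ?_, fun p q w w' _ hw hw' => ?_⟩
  · rw [mulMR_sub_mulMR (hu.length_eq.trans hv.length_eq.symm), hu.length_eq, hw'.length_eq]
    refine Submodule.sum_mem _ fun A hA => Submodule.subset_span ⟨p + q, _, _,
      isPermWord_wordOn_append hu hw' hA, isPermWord_wordOn_append hv hw' hA, ?_, rfl⟩
    have hcard : A.card = p := (Finset.mem_powersetCard.mp hA).2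
    exact (huv.wordOn (hcard ▸ hu)).append_right _
  · rw [mulMR_sub_mulMR (length_swap2 w).symm, hw.length_eq, hw'.length_eq]
    simp only [wordOn_swap2]
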